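/- (Warm-up lemma.) There is a universal constant c > 0 such that the following holds. Let n ≥ 2, let μ be a random permutation of {1,...,n}, fix j ∈ {1,...,n}, and for each i ≤ j let c(i,j) be a collision of i and j independent of μ. Then (1/j) Σ_{i=1}^{j} ENT(μ c(i,j)) ≤ ENT(μ) − c · E[ENT(μ, j)] / log n. -/

import Mathlib

open Finset

/-
We index cards/positions by `Fin n` (0-indexed); the paper's index `j ∈ {1,…,n}`
corresponds to `j - 1 : Fin n` here, so `ENT(μ, j)` is the expected relative entropy of
the conditional law of `μ⁻¹(j)` given `F_{j+1}`, a distribution on `j + 1` values, and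
the average over `i ≤ j` is over `j + 1` indices.  A random permutation is described by
its law `p : Equiv.Perm (Fin n) → ℝ`.
-/

/-- Relative entropy `ENT(p) = Σ_i p_i log(|V| p_i)` of a distribution on a finite set,
with the convention `0 log 0 = 0` (automatic since `Real.log 0 = 0`). -/
noncomputable def relEnt {V : Type*} [Fintype V] (p : V → ℝ) : ℝ :=
  ∑ x, p x * Real.log ((Fintype.card V : ℝ) * p x)

/-- `p` is a probability distribution on the finite set `V`. -/
def IsDist {V : Type*} [Fintype V] (p : V → ℝ) : Prop :=
  (∀ x, 0 ≤ p x) ∧ (∑ x, p x) = 1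

/-- `P(π⁻¹(j) = σ⁻¹(j) for all j ≥ k)` when `π` is a random permutation with law `p`. -/
noncomputable def tailProb {n : ℕ} (p : Equiv.Perm (Fin n) → ℝ) (k : ℕ)
    (σ : Equiv.Perm (Fin n)) : ℝ :=
  ∑ τ ∈ Finset.univ.filter (fun τ : Equiv.Perm (Fin n) =>
      ∀ j : Fin n, k ≤ (j : ℕ) → τ.symm j = σ.symm j), p τ

/-- `E[ENT(π, k)] = E[ENT(π⁻¹(k) | F_{k+1})]`: the expected relative entropy of the
conditional distribution of `π⁻¹(k)` given `σ(π⁻¹(k+1),…)`, viewed as a distribution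
on the `k + 1` values not occupied by positions above `k`. -/
noncomputable def expCondEnt {n : ℕ} (p : Equiv.Perm (Fin n) → ℝ) (k : ℕ) : ℝ :=
  ∑ σ, p σ * Real.log (((k : ℝ) + 1) * (tailProb p k σ / tailProb p (k + 1) σ))

/-- The law of `μ c(i,j)` (apply `μ` first, then the collision), where `μ ~ p` and
`c(i,j)` is a collision of `i` and `j` (identity w.p. 1/2, transposition w.p. 1/2)
independent of `μ`. -/
noncomputable def collideLaw {n : ℕ} (p : Equiv.Perm (Fin n) → ℝ) (i j : Fin n) :
    Equiv.Perm (Fin n) → ℝ :=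
  fun g => (p g + p (Equiv.swap i j * g)) / 2

/-
Write `a(g)`, `b(g)` for the probabilities that `π⁻¹` agrees with `g⁻¹` on the positions `≥ j`,
resp. `≥ j + 1`, and `r_i(g)` for the same as `a(g)` with `π` replaced by `(i j) π`, so that the
corresponding tail law of `μ c(i,j)` is `(a + r_i) / 2`. Data processing for the tail map gives
`ENT(μ) - ENT(μ c(i,j)) ≥ E[log a - log ((a + r_i) / 2)]`. Since `∑_{i ≤ j} r_i = b`, concavity
of `log` bounds the sum over the `j + 1` values of `i` below by `(j + 1) E[log (2t / (1 + t))]`,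
where `t = (j + 1) a / b` and `E[log t] = E[ENT(μ, j)]`. The elementary inequality
`log (2t / (1 + t)) ≥ α log t + (1/2 - α)(1 - 1/t)` for `0 < t ≤ n`, `α = 1 / (100 log n)`,
together with `E[1/t] ≤ 1` (again a tail computation), finishes the proof.
-/

open Real

section FiberMass

variable {ι Y : Type*} [Fintype ι] [DecidableEq Y]

noncomputable def fiberMass (p : ι → ℝ) (T : ι → Y) (x : ι) : ℝ :=
  ∑ y ∈ univ.filter (fun y => T y = T x), p y

lemma fiberMass_congr (p : ι → ℝ) {T : ι → Y} {x y : ι} (h : T x = T y) :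
    fiberMass p T x = fiberMass p T y := by
  rw [fiberMass, fiberMass, h]

lemma fiberMass_nonneg {p : ι → ℝ} (hp : ∀ x, 0 ≤ p x) (T : ι → Y) (x : ι) :
    0 ≤ fiberMass p T x :=
  sum_nonneg fun y _ => hp y

lemma le_fiberMass {p : ι → ℝ} (hp : ∀ x, 0 ≤ p x) (T : ι → Y) (x : ι) :
    p x ≤ fiberMass p T x :=
  single_le_sum (fun y _ => hp y) (mem_filter.2 ⟨mem_univ x, rfl⟩)

-- self-adjointness of conditioning on `T`
lemma sum_mul_mul_fiberMass_comm (u v w : ι → ℝ) {T : ι → Y}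
    (hw : ∀ x y, T x = T y → w x = w y) :
    ∑ x, u x * w x * fiberMass v T x = ∑ x, v x * w x * fiberMass u T x := by
  simp only [fiberMass, mul_sum, sum_filter]
  rw [sum_comm]
  refine sum_congr rfl fun x _ => sum_congr rfl fun y _ => ?_
  by_cases h : T x = T y
  · rw [if_pos h, if_pos h.symm, hw x y h]; ring
  · rw [if_neg h, if_neg (Ne.symm h), mul_zero, mul_zero]

lemma sum_mul_fiberMass_div_le {p q : ι → ℝ} (hp : ∀ x, 0 ≤ p x) (hq : ∀ x, 0 ≤ q x)
    (T : ι → Y) :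
    ∑ x, p x * (fiberMass q T x / fiberMass p T x) ≤ ∑ x, q x := by
  calc ∑ x, p x * (fiberMass q T x / fiberMass p T x)
      = ∑ x, q x * (fiberMass p T x)⁻¹ * fiberMass p T x := by
        rw [← sum_mul_mul_fiberMass_comm _ _ _ fun x y h => by rw [fiberMass_congr p h]]
        exact sum_congr rfl fun x _ => by ring
    _ ≤ ∑ x, q x := sum_le_sum fun x _ => by
        rw [mul_assoc]
        exact mul_le_of_le_one_right (hq x) (inv_mul_le_one_of_le₀ le_rfl
          (fiberMass_nonneg hp T x))

/-- Data processing inequality: `log z ≤ z - 1` at `z = q x * P x / (p x * Q x)`, where `P`, `Q`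
are the fiber masses, and `sum_mul_fiberMass_div_le`. -/
lemma sum_mul_log_fiberMass_sub_le {p q : ι → ℝ} (hp : ∀ x, 0 ≤ p x) (hq : ∀ x, 0 ≤ q x)
    (hpq : ∀ x, q x = 0 → p x = 0) (T : ι → Y) :
    ∑ x, p x * (log (fiberMass p T x) - log (fiberMass q T x))
      ≤ ∑ x, p x * (log (p x) - log (q x)) := by
  have pointwise : ∀ x, p x * (log (fiberMass p T x) - log (fiberMass q T x))
      ≤ p x * (log (p x) - log (q x)) + (q x * (fiberMass p T x / fiberMass q T x) - p x) := by
    intro x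
    rcases (hp x).eq_or_lt with hpx | hpx
    · rw [← hpx]
      have := mul_nonneg (hq x) (div_nonneg (fiberMass_nonneg hp T x) (fiberMass_nonneg hq T x))
      linarith
    have hqx : 0 < q x := (hq x).lt_of_ne fun h => hpx.ne' (hpq x h.symm)
    have hP : 0 < fiberMass p T x := hpx.trans_le (le_fiberMass hp T x)
    have hQ : 0 < fiberMass q T x := hqx.trans_le (le_fiberMass hq T x)
    have htangent := log_le_sub_one_of_pos (show 0 < q x * fiberMass p T x / (p x * fiberMass q T x)
      by positivity)
    rw [log_div (by positivity) (by positivity), log_mul hqx.ne' hP.ne',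
      log_mul hpx.ne' hQ.ne'] at htangent
    have hmul := mul_le_mul_of_nonneg_left htangent hpx.le
    have hexpand : p x * (q x * fiberMass p T x / (p x * fiberMass q T x) - 1)
        = q x * (fiberMass p T x / fiberMass q T x) - p x := by
      field_simp
    linarith
  calc ∑ x, p x * (log (fiberMass p T x) - log (fiberMass q T x))
      ≤ ∑ x, (p x * (log (p x) - log (q x))
          + (q x * (fiberMass p T x / fiberMass q T x) - p x)) := sum_le_sum fun x _ => pointwise x
    _ ≤ ∑ x, p x * (log (p x) - log (q x)) := by
        rw [sum_add_distrib, sum_sub_distrib]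
        linarith [sum_mul_fiberMass_div_le hq hp T]

end FiberMass

section Analysis

/-- The slack `log (2x / (1 + x)) - α log x - (1/2 - α)(1 - 1/x)` of the scalar inequality
behind the lemma. Its derivative has the sign of `(x - 1)(1 - 2α(1 + x))`, so it is minimal, and
zero, at `x = 1` as long as `2α(1 + x) ≤ 1`. -/
noncomputable def collisionGap (α x : ℝ) : ℝ :=
  log 2 + (1 - α) * log x - log (1 + x) - (1 / 2 - α) * (1 - x⁻¹)

lemma collisionGap_one (α : ℝ) : collisionGap α 1 = 0 := by
  norm_num [collisionGap]

lemma hasDerivAt_collisionGap (α : ℝ) {x : ℝ} (hx : 0 < x) :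
    HasDerivAt (collisionGap α) ((x - 1) * (1 / 2 - α * (1 + x)) / (x ^ 2 * (1 + x))) x := by
  have hlog1 : HasDerivAt (fun y => log (1 + y)) (1 + x)⁻¹ x := by
    simpa using ((hasDerivAt_id' x).const_add 1).log (by positivity)
  have h : HasDerivAt (collisionGap α) _ x :=
    (((hasDerivAt_log hx.ne').const_mul (1 - α)).const_add (log 2)).sub hlog1 |>.sub
      (((hasDerivAt_inv hx.ne').const_sub 1).const_mul (1 / 2 - α))
  convert h using 1
  field_simp
  ring

lemma collisionGap_nonneg_of_le_one {α x : ℝ} (hα : α ≤ 1 / 4) (hx : 0 < x) (hx1 : x ≤ 1) :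
    0 ≤ collisionGap α x := by
  have hanti : AntitoneOn (collisionGap α) (Set.Icc x 1) := by
    refine antitoneOn_of_hasDerivWithinAt_nonpos
      (f' := fun y => (y - 1) * (1 / 2 - α * (1 + y)) / (y ^ 2 * (1 + y))) (convex_Icc x 1)
      (fun y hy => (hasDerivAt_collisionGap α (hx.trans_le hy.1)).continuousAt.continuousWithinAt)
      (fun y hy => ?_) (fun y hy => ?_) <;> rw [interior_Icc] at hy
    · exact (hasDerivAt_collisionGap α (hx.trans hy.1)).hasDerivWithinAt
    · have hy0 := hx.trans hy.1
      exact div_nonpos_of_nonpos_of_nonneg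
        (mul_nonpos_of_nonpos_of_nonneg (by linarith [hy.2]) (by nlinarith [hy.2])) (by positivity)
  simpa [collisionGap_one] using hanti ⟨le_rfl, hx1⟩ ⟨hx1, le_rfl⟩ hx1

lemma collisionGap_nonneg_of_one_le {α x : ℝ} (hx1 : 1 ≤ x) (hαx : 2 * α * (1 + x) ≤ 1) :
    0 ≤ collisionGap α x := by
  have hmono : MonotoneOn (collisionGap α) (Set.Icc 1 x) := by
    refine monotoneOn_of_hasDerivWithinAt_nonneg
      (f' := fun y => (y - 1) * (1 / 2 - α * (1 + y)) / (y ^ 2 * (1 + y))) (convex_Icc 1 x)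
      (fun y hy =>
        (hasDerivAt_collisionGap α (one_pos.trans_le hy.1)).continuousAt.continuousWithinAt)
      (fun y hy => ?_) (fun y hy => ?_) <;> rw [interior_Icc] at hy
    · exact (hasDerivAt_collisionGap α (one_pos.trans hy.1)).hasDerivWithinAt
    · have hy0 := one_pos.trans hy.1
      exact div_nonneg (mul_nonneg (by linarith [hy.1]) (by nlinarith [hy.2])) (by positivity)
  simpa [collisionGap_one] using hmono ⟨le_rfl, hx1⟩ ⟨hx1, le_rfl⟩ hx1

lemma add_mul_one_sub_inv_le_log_two_mul_div {α t : ℝ} (hα2 : α * log 2 ≤ 1 / 100)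
    (ht : 0 < t) (hαt : α * log t ≤ 1 / 100) :
    α * log t + (1 / 2 - α) * (1 - t⁻¹) ≤ log (2 * t / (1 + t)) := by
  have hlog2 := log_two_gt_d9
  have hα : α ≤ 1 / 4 := by nlinarith
  rw [log_div (by positivity) (by positivity), log_mul two_ne_zero ht.ne']
  suffices 0 ≤ collisionGap α t by rw [collisionGap] at this; linarith
  rcases le_total t 1 with ht1 | ht1
  · exact collisionGap_nonneg_of_le_one hα ht ht1
  rcases le_total (2 * α * (1 + t)) 1 with hαt' | hαt'
  · exact collisionGap_nonneg_of_one_le ht1 hαt'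
  -- here `t > 33`, and `log 2 - 1/t` beats `1/2 + α log t`
  have ht33 : 33 ≤ t := by nlinarith
  have hlog1t : log (1 + t) - log t ≤ t⁻¹ := by
    rw [← log_div (by positivity) ht.ne']
    calc log ((1 + t) / t) ≤ (1 + t) / t - 1 := log_le_sub_one_of_pos (by positivity)
      _ = t⁻¹ := by field_simp; ring
  have htinv : t⁻¹ ≤ 1 / 33 := by rw [inv_eq_one_div]; gcongr
  rw [collisionGap]
  nlinarith [inv_pos.2 ht]

end Analysis

section Averaging

variable {κ : Type*}

lemma sum_log_le_card_mul_log_average (s : Finset κ) {x : κ → ℝ} (hx : ∀ i ∈ s, 0 < x i) :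
    ∑ i ∈ s, log (x i) ≤ #s * log ((∑ i ∈ s, x i) / #s) := by
  rcases s.eq_empty_or_nonempty with rfl | hs
  · simp
  have hcard : (0 : ℝ) < #s := by exact_mod_cast hs.card_pos
  have hjensen := strictConcaveOn_log_Ioi.concaveOn.le_map_sum (t := s) (w := fun _ => (#s : ℝ)⁻¹)
    (p := x) (fun _ _ => by positivity) (by simp [hcard.ne']) hx
  simp only [smul_eq_mul, ← mul_sum] at hjensen
  rw [div_eq_inv_mul]
  calc ∑ i ∈ s, log (x i) = #s * ((#s : ℝ)⁻¹ * ∑ i ∈ s, log (x i)) := by field_simp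
    _ ≤ _ := by gcongr

lemma card_mul_log_sub_log_average_le (s : Finset κ) {a : ℝ} (ha : 0 < a) {r : κ → ℝ}
    (hr : ∀ i ∈ s, 0 ≤ r i) :
    #s * (log a - log ((#s * a + ∑ i ∈ s, r i) / (2 * #s)))
      ≤ ∑ i ∈ s, (log a - log ((a + r i) / 2)) := by
  have hjensen := sum_log_le_card_mul_log_average s (x := fun i => (a + r i) / 2)
    fun i hi => by linarith [hr i hi]
  have havg : (∑ i ∈ s, (a + r i) / 2) / #s = (#s * a + ∑ i ∈ s, r i) / (2 * #s) := by
    rw [← sum_div, sum_add_distrib, sum_const, nsmul_eq_mul, div_div, mul_comm 2]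
  rw [havg] at hjensen
  rw [sum_sub_distrib, sum_const, nsmul_eq_mul, mul_sub]
  linarith

lemma card_mul_le_sum_log_sub_log_half_add (s : Finset κ) {a b α : ℝ} {r : κ → ℝ}
    (ha : 0 < a) (hab : a ≤ b) (hr : ∀ i ∈ s, 0 ≤ r i) (hrb : ∑ i ∈ s, r i = b)
    (hα : 0 ≤ α) (hα2 : α * log 2 ≤ 1 / 100) (hαs : α * log #s ≤ 1 / 100) :
    #s * (α * log (#s * (a / b)) + (1 / 2 - α) * (1 - (#s * (a / b))⁻¹))
      ≤ ∑ i ∈ s, (log a - log ((a + r i) / 2)) := by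
  have hb : 0 < b := ha.trans_le hab
  have hs : s.Nonempty := nonempty_of_sum_ne_zero (hrb.trans_ne hb.ne')
  set c : ℝ := (#s : ℝ)
  have hc : 0 < c := Nat.cast_pos.2 hs.card_pos
  set t := c * (a / b) with ht_def
  have ht : 0 < t := by positivity
  have htc : t ≤ c := mul_le_of_le_one_right hc.le ((div_le_one hb).2 hab)
  have hαt : α * log t ≤ 1 / 100 := (mul_le_mul_of_nonneg_left (log_le_log ht htc) hα).trans hαs
  have hratio : 2 * t / (1 + t) = a / ((c * a + b) / (2 * c)) := by
    rw [ht_def]; field_simp; ring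
  calc c * (α * log t + (1 / 2 - α) * (1 - t⁻¹))
      ≤ c * log (2 * t / (1 + t)) := by
        gcongr; exact add_mul_one_sub_inv_le_log_two_mul_div hα2 ht hαt
    _ = c * (log a - log ((c * a + ∑ i ∈ s, r i) / (2 * c))) := by
        rw [hratio, hrb, log_div ha.ne' (by positivity)]
    _ ≤ ∑ i ∈ s, (log a - log ((a + r i) / 2)) := card_mul_log_sub_log_average_le s ha hr

variable {ι : Type*} [Fintype ι]

theorem card_mul_sum_mul_log_le (s : Finset κ) {p a b : ι → ℝ} {r : κ → ι → ℝ} {α : ℝ}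
    (hp : IsDist p) (hpa : ∀ g, p g ≤ a g) (hab : ∀ g, a g ≤ b g) (hr : ∀ i ∈ s, ∀ g, 0 ≤ r i g)
    (hrb : ∀ g, ∑ i ∈ s, r i g = b g) (hra : ∀ i ∈ s, ∑ g, p g * (r i g / a g) ≤ 1)
    (hα : 0 ≤ α) (hα2 : α * log 2 ≤ 1 / 100) (hαs : α * log #s ≤ 1 / 100) :
    #s * (α * ∑ g, p g * log (#s * (a g / b g)))
      ≤ ∑ i ∈ s, ∑ g, p g * (log (a g) - log ((a g + r i g) / 2)) := by
  obtain ⟨hp0, hp1⟩ := hp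
  set c : ℝ := (#s : ℝ)
  set t := fun g => c * (a g / b g) with ht_def
  have hinv : ∑ g, p g * (t g)⁻¹ ≤ 1 :=
    calc ∑ g, p g * (t g)⁻¹ = c⁻¹ * ∑ i ∈ s, ∑ g, p g * (r i g / a g) := by
          rw [sum_comm, mul_sum]
          refine sum_congr rfl fun g _ => ?_
          rw [← mul_sum, ← sum_div, hrb, ht_def, mul_inv, inv_div]
          ring
      _ ≤ c⁻¹ * c := by
          gcongr
          simpa using sum_le_sum hra
      _ ≤ 1 := inv_mul_le_one_of_le₀ le_rfl (Nat.cast_nonneg _)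
  have hα_half : α ≤ 1 / 2 := by nlinarith [log_two_gt_d9]
  have pointwise : ∀ g, p g * (c * (α * log (t g) + (1 / 2 - α) * (1 - (t g)⁻¹)))
      ≤ p g * ∑ i ∈ s, (log (a g) - log ((a g + r i g) / 2)) := by
    intro g
    rcases (hp0 g).eq_or_lt with hpg | hpg
    · rw [← hpg, zero_mul, zero_mul]
    exact mul_le_mul_of_nonneg_left (card_mul_le_sum_log_sub_log_half_add s
      (hpg.trans_le (hpa g)) (hab g) (fun i hi => hr i hi g) (hrb g) hα hα2 hαs) hpg.le
  calc c * (α * ∑ g, p g * log (t g))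
      ≤ c * (α * ∑ g, p g * log (t g)) + c * (1 / 2 - α) * (1 - ∑ g, p g * (t g)⁻¹) :=
        le_add_of_nonneg_right
          (mul_nonneg (mul_nonneg (Nat.cast_nonneg _) (by linarith)) (by linarith))
    _ = c * (α * ∑ g, p g * log (t g)) + c * (1 / 2 - α) * (∑ g, p g - ∑ g, p g * (t g)⁻¹) := by
        rw [hp1]
    _ = ∑ g, p g * (c * (α * log (t g) + (1 / 2 - α) * (1 - (t g)⁻¹))) := by
        rw [mul_sum, mul_sum, ← sum_sub_distrib, mul_sum, ← sum_add_distrib]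
        exact sum_congr rfl fun g _ => by ring
    _ ≤ ∑ g, p g * ∑ i ∈ s, (log (a g) - log ((a g + r i g) / 2)) :=
        sum_le_sum fun g _ => pointwise g
    _ = ∑ i ∈ s, ∑ g, p g * (log (a g) - log ((a g + r i g) / 2)) := by
        simp only [mul_sum]; exact sum_comm

end Averaging

section Tails

variable {n : ℕ}

def tailMap (k : ℕ) (g : Equiv.Perm (Fin n)) : {m : Fin n // k ≤ (m : ℕ)} → Fin n :=
  fun m => g.symm m

lemma tailProb_eq_fiberMass (p : Equiv.Perm (Fin n) → ℝ) (k : ℕ) :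
    tailProb p k = fiberMass p (tailMap k) := by
  ext g
  refine sum_congr (filter_congr fun τ _ => ?_) fun _ _ => rfl
  simp only [tailMap, funext_iff, Subtype.forall]

lemma tailProb_collideLaw (p : Equiv.Perm (Fin n) → ℝ) (i j : Fin n) (k : ℕ)
    (g : Equiv.Perm (Fin n)) :
    tailProb (collideLaw p i j) k g
      = (tailProb p k g + tailProb (fun τ => p (Equiv.swap i j * τ)) k g) / 2 := by
  simp only [tailProb, collideLaw, ← sum_div, sum_add_distrib]

lemma swap_mul_symm_agree_iff {i j : Fin n} (hij : i ≤ j) (τ g : Equiv.Perm (Fin n)) :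
    (∀ m : Fin n, (j : ℕ) ≤ m → (Equiv.swap i j * τ).symm m = g.symm m) ↔
      (∀ m : Fin n, (j : ℕ) + 1 ≤ m → τ.symm m = g.symm m) ∧ τ (g.symm j) = i := by
  have hsymm : ∀ m, (Equiv.swap i j * τ).symm m = τ.symm (Equiv.swap i j m) := fun _ => rfl
  have hfix : ∀ m : Fin n, (j : ℕ) + 1 ≤ m → Equiv.swap i j m = m := fun m hm =>
    Equiv.swap_apply_of_ne_of_ne (by rintro rfl; have : (m : ℕ) ≤ j := hij; omega)
      (by rintro rfl; omega)
  simp only [hsymm]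
  constructor
  · intro h
    refine ⟨fun m hm => ?_, ?_⟩
    · rw [← h m (by omega), hfix m hm]
    · rw [← h j le_rfl, Equiv.swap_apply_right, Equiv.apply_symm_apply]
  · rintro ⟨htail, hj⟩ m hm
    rcases hm.eq_or_lt with hmj | hmj
    · rw [Fin.ext hmj.symm, Equiv.swap_apply_right, ← hj, Equiv.symm_apply_apply]
    · rw [hfix m hmj, htail m hmj]

lemma apply_symm_le_of_tail_agree {j : Fin n} {τ g : Equiv.Perm (Fin n)}
    (h : ∀ m : Fin n, (j : ℕ) + 1 ≤ m → τ.symm m = g.symm m) : τ (g.symm j) ≤ j := by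
  by_contra hlt
  have hj : (j : ℕ) + 1 ≤ τ (g.symm j) := by rw [not_le, Fin.lt_def] at hlt; omega
  have := h _ hj
  rw [Equiv.symm_apply_apply, g.symm.injective.eq_iff] at this
  exact hlt this.ge

lemma sum_tailProb_swap_mul (p : Equiv.Perm (Fin n) → ℝ) (j : Fin n) (g : Equiv.Perm (Fin n)) :
    ∑ i ∈ Iic j, tailProb (fun τ => p (Equiv.swap i j * τ)) j g = tailProb p (j + 1) g := by
  have reindex : ∀ i ∈ Iic j, tailProb (fun τ => p (Equiv.swap i j * τ)) j g
      = ∑ τ, if (∀ m : Fin n, (j : ℕ) + 1 ≤ m → τ.symm m = g.symm m) ∧ τ (g.symm j) = i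
          then p τ else 0 := by
    intro i hi
    rw [tailProb, sum_filter]
    refine Fintype.sum_equiv (Equiv.mulLeft (Equiv.swap i j)) _ _ fun τ => ?_
    have hiff := swap_mul_symm_agree_iff (mem_Iic.1 hi) (Equiv.swap i j * τ) g
    rw [Equiv.swap_mul_self_mul] at hiff
    exact if_congr hiff rfl rfl
  rw [sum_congr rfl reindex, sum_comm, tailProb, sum_filter]
  refine sum_congr rfl fun τ _ => ?_
  by_cases htail : ∀ m : Fin n, (j : ℕ) + 1 ≤ m → τ.symm m = g.symm m
  · simp only [and_iff_right htail, if_pos htail]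
    rw [sum_ite_eq, if_pos (mem_Iic.2 (apply_symm_le_of_tail_agree htail))]
  · simp only [htail, false_and, if_false, sum_const_zero]

lemma tailProb_nonneg {p : Equiv.Perm (Fin n) → ℝ} (hp : ∀ g, 0 ≤ p g) (k : ℕ)
    (g : Equiv.Perm (Fin n)) : 0 ≤ tailProb p k g :=
  sum_nonneg fun τ _ => hp τ

lemma le_tailProb {p : Equiv.Perm (Fin n) → ℝ} (hp : ∀ g, 0 ≤ p g) (k : ℕ)
    (g : Equiv.Perm (Fin n)) : p g ≤ tailProb p k g := by
  rw [tailProb_eq_fiberMass]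
  exact le_fiberMass hp _ g

lemma tailProb_mono {p : Equiv.Perm (Fin n) → ℝ} (hp : ∀ g, 0 ≤ p g) {k l : ℕ} (hkl : k ≤ l)
    (g : Equiv.Perm (Fin n)) : tailProb p k g ≤ tailProb p l g :=
  sum_le_sum_of_subset_of_nonneg
    (monotone_filter_right _ fun _ _ hτ m hm => hτ m (hkl.trans hm)) fun τ _ _ => hp τ

lemma sum_mul_tailProb_swap_mul_div_le {p : Equiv.Perm (Fin n) → ℝ} (hp : IsDist p)
    (i j : Fin n) (k : ℕ) :
    ∑ g, p g * (tailProb (fun τ => p (Equiv.swap i j * τ)) k g / tailProb p k g) ≤ 1 := by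
  rw [tailProb_eq_fiberMass, tailProb_eq_fiberMass, ← hp.2,
    ← Equiv.sum_comp (Equiv.mulLeft (Equiv.swap i j)) p]
  exact sum_mul_fiberMass_div_le hp.1 (fun τ => hp.1 _) (tailMap k)

end Tails

section Collisions

variable {n : ℕ} (i j : Fin n)

lemma collideLaw_swap_mul (p : Equiv.Perm (Fin n) → ℝ) (g : Equiv.Perm (Fin n)) :
    collideLaw p i j (Equiv.swap i j * g) = collideLaw p i j g := by
  rw [collideLaw, collideLaw, Equiv.swap_mul_self_mul, add_comm]

lemma half_le_collideLaw {p : Equiv.Perm (Fin n) → ℝ} (hp : ∀ g, 0 ≤ p g)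
    (g : Equiv.Perm (Fin n)) : p g / 2 ≤ collideLaw p i j g := by
  rw [collideLaw]
  linarith [hp (Equiv.swap i j * g)]

lemma sum_collideLaw_mul (p : Equiv.Perm (Fin n) → ℝ) {F : Equiv.Perm (Fin n) → ℝ}
    (hF : ∀ g, F (Equiv.swap i j * g) = F g) :
    ∑ g, collideLaw p i j g * F g = ∑ g, p g * F g := by
  have hswap : ∑ g, p (Equiv.swap i j * g) * F g = ∑ g, p g * F g := by
    simpa only [Equiv.coe_mulLeft, hF] using
      Equiv.sum_comp (Equiv.mulLeft (Equiv.swap i j)) fun g => p g * F g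
  simp only [collideLaw, add_div, add_mul, sum_add_distrib, div_mul_eq_mul_div, ← sum_div, hswap]
  ring

lemma relEnt_sub_relEnt_collideLaw {p : Equiv.Perm (Fin n) → ℝ} (hp : ∀ g, 0 ≤ p g) :
    relEnt p - relEnt (collideLaw p i j)
      = ∑ g, p g * (log (p g) - log (collideLaw p i j g)) := by
  rw [relEnt, relEnt, sum_collideLaw_mul i j p fun g => by rw [collideLaw_swap_mul],
    ← sum_sub_distrib]
  refine sum_congr rfl fun g _ => ?_
  rcases (hp g).eq_or_lt with hpg | hpg
  · rw [← hpg]; ring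
  have hν : 0 < collideLaw p i j g := by linarith [half_le_collideLaw i j hp g]
  have hcard : (0 : ℝ) < Fintype.card (Equiv.Perm (Fin n)) := Nat.cast_pos.2 Fintype.card_pos
  rw [log_mul hcard.ne' hpg.ne', log_mul hcard.ne' hν.ne']
  ring

lemma sum_mul_log_tailProb_sub_le_relEnt_sub {p : Equiv.Perm (Fin n) → ℝ} (hp : ∀ g, 0 ≤ p g) :
    ∑ g, p g * (log (tailProb p j g)
        - log ((tailProb p j g + tailProb (fun τ => p (Equiv.swap i j * τ)) j g) / 2))
      ≤ relEnt p - relEnt (collideLaw p i j) := by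
  rw [relEnt_sub_relEnt_collideLaw i j hp]
  calc _ = ∑ g, p g * (log (fiberMass p (tailMap j) g)
          - log (fiberMass (collideLaw p i j) (tailMap j) g)) :=
        sum_congr rfl fun g _ => by rw [← tailProb_collideLaw, tailProb_eq_fiberMass,
          tailProb_eq_fiberMass]
    _ ≤ _ := sum_mul_log_fiberMass_sub_le hp
        (fun g => by linarith [half_le_collideLaw i j hp g, hp g])
        (fun g hg => by linarith [half_le_collideLaw i j hp g, hp g]) _

end Collisions

/-- Warm-up lemma (Lemma 6 of the paper): there is a universal constant `c > 0` such that
for any `n ≥ 2`, any random permutation `μ` with law `p`, and any position `j`,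
`(1/j) Σ_{i ≤ j} ENT(μ c(i,j)) ≤ ENT(μ) − c E[ENT(μ, j)] / log n`. -/
theorem warmup_lemma :
    ∃ c : ℝ, 0 < c ∧
      ∀ (n : ℕ), 2 ≤ n → ∀ p : Equiv.Perm (Fin n) → ℝ, IsDist p → ∀ j : Fin n,
        (1 / ((j : ℕ) + 1 : ℝ)) * ∑ i ∈ Finset.Iic j, relEnt (collideLaw p i j)
          ≤ relEnt p - c * expCondEnt p (j : ℕ) / Real.log n := by
  refine ⟨1 / 100, by norm_num, fun n hn p hp j => ?_⟩
  have hlog2 : log 2 ≤ log n := log_le_log two_pos (by exact_mod_cast hn)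
  have hlogn : 0 < log n := (log_pos one_lt_two).trans_le hlog2
  have hα : ∀ x : ℝ, 0 < x → x ≤ n → 1 / 100 / log n * log x ≤ 1 / 100 := fun x hx hxn => by
    rw [div_mul_eq_mul_div, div_le_iff₀ hlogn]
    nlinarith [log_le_log hx hxn]
  have hj : ((#(Iic j) : ℕ) : ℝ) = (j : ℕ) + 1 := by rw [Fin.card_Iic, Nat.cast_add_one]
  have hcore := card_mul_sum_mul_log_le (Iic j) hp (le_tailProb hp.1 _)
    (tailProb_mono hp.1 (Nat.le_add_right _ 1)) (fun i _ => tailProb_nonneg (fun _ => hp.1 _) _)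
    (sum_tailProb_swap_mul p j) (fun i _ => sum_mul_tailProb_swap_mul_div_le hp i j _)
    (by positivity) (hα 2 two_pos (by exact_mod_cast hn))
    (hα _ (by rw [hj]; positivity) (by rw [hj]; exact_mod_cast j.isLt))
  have hcollide := sum_le_sum fun i (_ : i ∈ Iic j) =>
    sum_mul_log_tailProb_sub_le_relEnt_sub i j hp.1
  rw [sum_sub_distrib, sum_const, nsmul_eq_mul] at hcollide
  rw [hj] at hcore hcollide
  have hE : 1 / 100 * expCondEnt p j / log n = 1 / 100 / log n * expCondEnt p j := by ring
  rw [one_div_mul_eq_div, div_le_iff₀ (by positivity), hE, expCondEnt]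
  linarith
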